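/- Let n_rad ≥ 1, n_orb ≥ 1, n = n_rad + n_orb, fix 1 ≤ y ≤ n_rad, and let Z_y = I₂^{⊗(y−1)} ⊗ Z ⊗ I₂^{⊗(n−y)}. Then Z_y is Hilbert–Schmidt-orthogonal to every element of the centre 𝔷 of the dynamical Lie algebra, i.e. ⟨C, Z_y⟩_HS = 0 for each C in the ℝ-span of {i·I₂^{⊗n}, i·(I₂^{⊗ n_rad} ⊗ Z ⊗ I₂^{⊗(n_orb−1)})} ∪ {i·cz_{j,j+1} : n_rad+1 ≤ j ≤ n−1}. (Hence the mean of the loss Tr[UρU†Z_y] over the model vanishes.) -/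

import Mathlib

open Matrix Complex

attribute [local instance 100] LieRing.ofAssociativeRing

noncomputable section

abbrev QMat (n : ℕ) := Matrix (Fin n → Fin 2) (Fin n → Fin 2) ℂ

def PX : Matrix (Fin 2) (Fin 2) ℂ := !![0, 1; 1, 0]
def PY : Matrix (Fin 2) (Fin 2) ℂ := !![0, -Complex.I; Complex.I, 0]
def PZ : Matrix (Fin 2) (Fin 2) ℂ := !![1, 0; 0, -1]

/-- The tensor (Kronecker) product of a family of single-qubit matrices. -/
def tens {n : ℕ} (As : Fin n → Matrix (Fin 2) (Fin 2) ℂ) : QMat n :=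
  Matrix.of fun f g => ∏ k, As k (f k) (g k)

/-- A single-qubit matrix `A` acting on qubit `j` (tensored with identity elsewhere). -/
def onQubit {n : ℕ} (A : Matrix (Fin 2) (Fin 2) ℂ) (j : Fin n) : QMat n :=
  tens fun k => if k = j then A else 1

/-- The Kronecker product of an `a`-qubit matrix and a `b`-qubit matrix. -/
def kron {a b : ℕ} (M : QMat a) (N : QMat b) : QMat (a + b) :=
  Matrix.of fun f g =>
    M (fun i => f (Fin.castAdd b i)) (fun i => g (Fin.castAdd b i)) *
      N (fun i => f (Fin.natAdd a i)) (fun i => g (Fin.natAdd a i))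

/-- The generator of the CZ gate on qubits `j`, `j'`. -/
def czGen {n : ℕ} (j j' : Fin n) : QMat n :=
  (-(Real.pi / 4) : ℂ) • (1 - onQubit PZ j - onQubit PZ j' + onQubit PZ j * onQubit PZ j')

/-- The generators of the rotationally equivariant model: `i X_j, i Y_j, i Z_j` on the
first `nrad` qubits, and `i cz_{j,j+1}` for all neighbouring pairs. -/
def genSet (nrad norb : ℕ) : Set (QMat (nrad + norb)) :=
  {M | ∃ j : Fin (nrad + norb), (j : ℕ) < nrad ∧
      (M = Complex.I • onQubit PX j ∨ M = Complex.I • onQubit PY j ∨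
        M = Complex.I • onQubit PZ j)} ∪
  {M | ∃ (j : ℕ) (h : j + 1 < nrad + norb),
      M = Complex.I • czGen ⟨j, lt_of_le_of_lt (Nat.le_succ j) h⟩ ⟨j + 1, h⟩}

/-- The dynamical Lie algebra: the smallest real Lie subalgebra of the `2^n × 2^n` complex
matrices containing the generators. -/
def DLA (nrad norb : ℕ) : LieSubalgebra ℝ (QMat (nrad + norb)) :=
  LieSubalgebra.lieSpan ℝ _ (genSet nrad norb)


/-- The Hilbert–Schmidt inner product `⟨A, B⟩ = Tr(Aᴴ B)`. -/
def hsInner {n : ℕ} (A B : QMat n) : ℂ := (Aᴴ * B).trace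

/-- `𝔷`: the real span of `i I₂^{⊗n}`, `i (I₂^{⊗n_rad} ⊗ Z ⊗ I₂^{⊗(n_orb-1)})` and the CZ
generators on the angular register. -/
def centreZ (nrad norb : ℕ) (hb : 0 < norb) : Submodule ℝ (QMat (nrad + norb)) :=
  Submodule.span ℝ
    ({Complex.I • (1 : QMat (nrad + norb)),
      Complex.I • kron (1 : QMat nrad) (onQubit PZ (⟨0, hb⟩ : Fin norb))} ∪
     {M | ∃ (j : ℕ) (h : j + 1 < nrad + norb), nrad ≤ j ∧
        M = Complex.I • czGen ⟨j, lt_of_le_of_lt (Nat.le_succ j) h⟩ ⟨j + 1, h⟩})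


/-!
Every generator of `𝔷` is, up to a scalar, a linear combination of tensor products that act as
the identity on the radial qubit `y`. The Hilbert–Schmidt pairing of tensor products factorises
qubit by qubit, so pairing such a product with `Z_y` picks up the factor `Tr Z = 0`. Since
`C ↦ ⟨C, Z_y⟩` is `ℝ`-linear, its kernel contains the whole real span.
-/

section Tensor

variable {n : ℕ}

lemma tens_one : tens (fun _ : Fin n => (1 : Matrix (Fin 2) (Fin 2) ℂ)) = 1 := by
  ext f g
  rcases eq_or_ne f g with rfl | hfg
  · simp [tens, one_apply]
  · obtain ⟨k, hk⟩ := Function.ne_iff.mp hfg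
    rw [tens, of_apply, one_apply_ne hfg, Finset.prod_eq_zero (Finset.mem_univ k)]
    exact one_apply_ne hk

lemma tens_mul (As Bs : Fin n → Matrix (Fin 2) (Fin 2) ℂ) :
    tens As * tens Bs = tens fun k => As k * Bs k := by
  ext f g
  simp only [tens, mul_apply, of_apply]
  rw [Fintype.prod_sum fun k i => As k (f k) i * Bs k i (g k)]
  simp [Finset.prod_mul_distrib]

lemma conjTranspose_tens (As : Fin n → Matrix (Fin 2) (Fin 2) ℂ) :
    (tens As)ᴴ = tens fun k => (As k)ᴴ := by
  ext f g
  simp [tens, conjTranspose_apply]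

lemma trace_tens (As : Fin n → Matrix (Fin 2) (Fin 2) ℂ) :
    (tens As).trace = ∏ k, (As k).trace := by
  simp only [trace, diag, tens, of_apply]
  rw [Fintype.prod_sum fun k i => As k i i]

lemma kron_tens {a b : ℕ} (As : Fin a → Matrix (Fin 2) (Fin 2) ℂ)
    (Bs : Fin b → Matrix (Fin 2) (Fin 2) ℂ) :
    kron (tens As) (tens Bs) = tens (Fin.append As Bs) := by
  ext f g
  simp only [kron, tens, of_apply, Fin.prod_univ_add, Fin.append_left, Fin.append_right]

end Tensor

section HilbertSchmidt

variable {n : ℕ}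

lemma hsInner_add_left (A A' B : QMat n) :
    hsInner (A + A') B = hsInner A B + hsInner A' B := by
  simp [hsInner, conjTranspose_add, add_mul]

lemma hsInner_sub_left (A A' B : QMat n) :
    hsInner (A - A') B = hsInner A B - hsInner A' B := by
  simp [hsInner, conjTranspose_sub, sub_mul]

lemma hsInner_smul_left (c : ℂ) (A B : QMat n) :
    hsInner (c • A) B = starRingEnd ℂ c * hsInner A B := by
  simp [hsInner, conjTranspose_smul, trace_smul]

def hsInnerLeftₗ (B : QMat n) : QMat n →ₗ[ℝ] ℂ where
  toFun A := hsInner A B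
  map_add' A A' := hsInner_add_left A A' B
  map_smul' r A := by
    rw [← Complex.coe_smul, hsInner_smul_left, Complex.conj_ofReal, RingHom.id_apply,
      Complex.real_smul]

@[simp]
lemma hsInnerLeftₗ_apply (A B : QMat n) : hsInnerLeftₗ B A = hsInner A B := rfl

lemma hsInner_tens (As Bs : Fin n → Matrix (Fin 2) (Fin 2) ℂ) :
    hsInner (tens As) (tens Bs) = ∏ k, ((As k)ᴴ * Bs k).trace := by
  rw [hsInner, conjTranspose_tens, tens_mul, trace_tens]

variable {B : Matrix (Fin 2) (Fin 2) ℂ}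

lemma hsInner_tens_onQubit_eq_zero (hB : B.trace = 0) (As : Fin n → Matrix (Fin 2) (Fin 2) ℂ)
    {y : Fin n} (hy : As y = 1) : hsInner (tens As) (onQubit B y) = 0 := by
  rw [onQubit, hsInner_tens, Finset.prod_eq_zero (Finset.mem_univ y)]
  simp [hy, hB]

lemma hsInner_one_onQubit (hB : B.trace = 0) (y : Fin n) : hsInner 1 (onQubit B y) = 0 := by
  rw [← tens_one]
  exact hsInner_tens_onQubit_eq_zero hB _ rfl

lemma hsInner_onQubit_onQubit_of_ne (hB : B.trace = 0) (A : Matrix (Fin 2) (Fin 2) ℂ)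
    {j y : Fin n} (h : y ≠ j) : hsInner (onQubit A j) (onQubit B y) = 0 :=
  hsInner_tens_onQubit_eq_zero hB _ (if_neg h)

lemma hsInner_czGen_onQubit (hB : B.trace = 0) {j j' y : Fin n} (h : y ≠ j) (h' : y ≠ j') :
    hsInner (czGen j j') (onQubit B y) = 0 := by
  have hZZ : hsInner (onQubit PZ j * onQubit PZ j') (onQubit B y) = 0 := by
    rw [onQubit, onQubit, tens_mul]
    exact hsInner_tens_onQubit_eq_zero hB _ (by rw [if_neg h, if_neg h', one_mul])
  rw [czGen, hsInner_smul_left, hsInner_add_left, hsInner_sub_left, hsInner_sub_left,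
    hsInner_one_onQubit hB, hsInner_onQubit_onQubit_of_ne hB _ h,
    hsInner_onQubit_onQubit_of_ne hB _ h', hZZ]
  ring

lemma hsInner_kron_one_tens_onQubit_castAdd {a b : ℕ} (hB : B.trace = 0)
    (Bs : Fin b → Matrix (Fin 2) (Fin 2) ℂ) (i : Fin a) :
    hsInner (kron (1 : QMat a) (tens Bs)) (onQubit B (Fin.castAdd b i)) = 0 := by
  rw [← tens_one, kron_tens]
  exact hsInner_tens_onQubit_eq_zero hB _ (Fin.append_left _ _ i)

end HilbertSchmidt

lemma trace_PZ : PZ.trace = 0 := by simp [PZ, trace_fin_two]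

theorem centre_orthogonal_Zy_general (nrad norb : ℕ) (h2 : 1 ≤ norb)
    (y : Fin (nrad + norb)) (hy : (y : ℕ) < nrad) :
    ∀ C ∈ centreZ nrad norb h2, hsInner C (onQubit PZ y) = 0 := by
  suffices centreZ nrad norb h2 ≤ LinearMap.ker (hsInnerLeftₗ (onQubit PZ y)) from this
  refine Submodule.span_le.mpr ?_
  rintro M ((rfl | rfl) | ⟨j, hj, hnj, rfl⟩) <;>
    rw [SetLike.mem_coe, LinearMap.mem_ker, hsInnerLeftₗ_apply, hsInner_smul_left, mul_eq_zero]
    <;> right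
  · exact hsInner_one_onQubit trace_PZ y
  · exact hsInner_kron_one_tens_onQubit_castAdd trace_PZ _ (⟨y, hy⟩ : Fin nrad)
  · exact hsInner_czGen_onQubit trace_PZ (Fin.ne_of_val_ne (show (y : ℕ) ≠ j by omega))
      (Fin.ne_of_val_ne (show (y : ℕ) ≠ j + 1 by omega))

/-- The measured observable `Z_y` (for a radial qubit `y`) is
Hilbert–Schmidt orthogonal to every element of the centre `𝔷` of the dynamical Lie
algebra; hence the mean of the loss vanishes. -/
theorem centre_orthogonal_Zy (nrad norb : ℕ) (h1 : 1 ≤ nrad) (h2 : 1 ≤ norb)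
    (y : Fin (nrad + norb)) (hy : (y : ℕ) < nrad) :
    ∀ C ∈ centreZ nrad norb h2, hsInner C (onQubit PZ y) = 0 :=
  centre_orthogonal_Zy_general nrad norb h2 y hy

end
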